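/- Every κ-Suslin set admits a scale: if T is a tree on ℕ × κ and A = p[T], then defining for x ∈ A the leftmost witness ℓ_x (the lexicographically least ℓ with (x,ℓ) a branch of T) and letting φ_n(x) be the rank of the tuple (x(0), ℓ_x(0), …, x(n), ℓ_x(n)) in the lexicographic wellorder of (n+1)-tuples from ℕ × κ, the sequence ⟨φ_n⟩ is a scale on A: if x_k ∈ A, x_k → x pointwise, and each φ_n(x_k) is eventually constant in k with eventual value λ_n, then x ∈ A and φ_n(x) ≤ λ_n for all n. -/
import Mathlib


/-- `(x, ℓ)` is an infinite branch of the tree `T` on `ℕ × κ`. -/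
def IsBranch2 (T : Set (List ℕ × List Ordinal)) (x : ℕ → ℕ) (ℓ : ℕ → Ordinal) : Prop :=
  ∀ n, ((List.ofFn fun i : Fin n => x i), (List.ofFn fun i : Fin n => ℓ i)) ∈ T

/-- Lexicographic order on `ℕ → Ordinal`. -/
def LexLe (f g : ℕ → Ordinal) : Prop :=
  f = g ∨ ∃ n, (∀ m < n, f m = g m) ∧ f n < g n

/-- Strict lexicographic order on `(n+1)`-tuples from `ℕ × Ordinal`,
where `ℕ × Ordinal` itself is ordered lexicographically. -/
def TupleLexLt (n : ℕ) (f g : Fin (n + 1) → ℕ × Ordinal) : Prop :=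
  ∃ i, (∀ j < i, f j = g j) ∧
    ((f i).1 < (g i).1 ∨ ((f i).1 = (g i).1 ∧ (f i).2 < (g i).2))

lemma tuple_eq_of_not_lt {n : ℕ} {f g : Fin (n + 1) → ℕ × Ordinal}
    (h1 : ¬ TupleLexLt n f g) (h2 : ¬ TupleLexLt n g f) : f = g := by
  by_contra hne
  obtain ⟨i0, hi0⟩ := Function.ne_iff.mp hne
  set S : Set ℕ := {m | ∃ h : m < n + 1, f ⟨m, h⟩ ≠ g ⟨m, h⟩} with hS
  have hSne : S.Nonempty := ⟨i0.1, i0.2, by simpa using hi0⟩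
  obtain ⟨hlt, hne2⟩ := Nat.sInf_mem hSne
  set i : Fin (n + 1) := ⟨sInf S, hlt⟩ with hi
  have hmin : ∀ j : Fin (n + 1), j < i → f j = g j := by
    intro j hj
    by_contra hc
    have : sInf S ≤ j.1 := Nat.sInf_le ⟨j.2, by simpa using hc⟩
    exact absurd this (not_le.mpr hj)
  rcases lt_trichotomy (f i).1 (g i).1 with h | h | h
  · exact h1 ⟨i, hmin, Or.inl h⟩
  · rcases lt_trichotomy (f i).2 (g i).2 with h' | h' | h'
    · exact h1 ⟨i, hmin, Or.inr ⟨h, h'⟩⟩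
    · exact hne2 (Prod.ext h h')
    · exact h2 ⟨i, fun j hj => (hmin j hj).symm, Or.inr ⟨h.symm, h'⟩⟩
  · exact h2 ⟨i, fun j hj => (hmin j hj).symm, Or.inl h⟩

/-- Every `κ`-Suslin set admits a scale: the leftmost-branch norms form a scale. -/
theorem suslin_scale (κ : Ordinal) (T : Set (List ℕ × List Ordinal))
    (hT : ∀ p ∈ T, p.1.length = p.2.length ∧ ∀ a ∈ p.2, a < κ)
    (hTc : ∀ p ∈ T, ∀ n, (p.1.take n, p.2.take n) ∈ T)
    (A : Set (ℕ → ℕ)) (hA : A = {x | ∃ ℓ, IsBranch2 T x ℓ})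
    (ℓx : (ℕ → ℕ) → ℕ → Ordinal)
    (hℓx : ∀ x ∈ A, IsBranch2 T x (ℓx x) ∧ ∀ g, IsBranch2 T x g → LexLe (ℓx x) g)
    (φ : ℕ → (ℕ → ℕ) → Ordinal)
    (hφ : ∀ n, ∀ x ∈ A, ∀ y ∈ A,
      (φ n x < φ n y ↔
        TupleLexLt n (fun i => (x i.1, ℓx x i.1)) (fun i => (y i.1, ℓx y i.1)))) :
    ∀ (xk : ℕ → ℕ → ℕ) (x : ℕ → ℕ) (lam : ℕ → Ordinal),
      (∀ k, xk k ∈ A) →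
      (∀ n, ∃ K, ∀ k ≥ K, xk k n = x n) →
      (∀ n, ∃ K, ∀ k ≥ K, φ n (xk k) = lam n) →
      x ∈ A ∧ ∀ n, φ n x ≤ lam n := by
  intro xk x lam hkA hconv hphi
  classical
  choose Kx hKx using hconv
  choose Kφ hKφ using hphi
  -- the tuples are eventually constant
  have tup : ∀ n k k', Kφ n ≤ k → Kφ n ≤ k' →
      (fun i : Fin (n + 1) => (xk k i.1, ℓx (xk k) i.1))
        = fun i : Fin (n + 1) => (xk k' i.1, ℓx (xk k') i.1) := by
    intro n k k' hk hk'
    have h1 : φ n (xk k) = φ n (xk k') := by rw [hKφ n k hk, hKφ n k' hk']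
    apply tuple_eq_of_not_lt
    · intro hl
      have := (hφ n (xk k) (hkA k) (xk k') (hkA k')).mpr hl
      rw [h1] at this
      exact lt_irrefl _ this
    · intro hl
      have := (hφ n (xk k') (hkA k') (xk k) (hkA k)).mpr hl
      rw [h1] at this
      exact lt_irrefl _ this
  set ℓ : ℕ → Ordinal := fun i => ℓx (xk (Kφ i)) i with hℓ
  have hℓstab : ∀ n k, Kφ n ≤ k → ∀ i ≤ n, ℓx (xk k) i = ℓ i := by
    intro n k hk i hi
    have hi' : i < n + 1 := Nat.lt_succ_of_le hi
    have h1 := congrFun (tup n k (max (Kφ n) (Kφ i)) hk (le_max_left _ _)) ⟨i, hi'⟩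
    have h2 := congrFun (tup i (max (Kφ n) (Kφ i)) (Kφ i) (le_max_right _ _) le_rfl)
      ⟨i, Nat.lt_succ_self i⟩
    have e1 : ℓx (xk k) i = ℓx (xk (max (Kφ n) (Kφ i))) i := (Prod.ext_iff.mp h1).2
    have e2 : ℓx (xk (max (Kφ n) (Kφ i))) i = ℓx (xk (Kφ i)) i := (Prod.ext_iff.mp h2).2
    rw [e1, e2]
  have hxstab : ∀ n k, (Finset.range n).sup Kx ≤ k → ∀ i < n, xk k i = x i := by
    intro n k hk i hi
    exact hKx i k (le_trans (Finset.le_sup (Finset.mem_range.mpr hi)) hk)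
  -- (x, ℓ) is a branch
  have hbr : IsBranch2 T x ℓ := by
    intro n
    set k := max (Kφ n) ((Finset.range n).sup Kx) with hk
    have hb := (hℓx (xk k) (hkA k)).1 n
    have e1 : (List.ofFn fun i : Fin n => xk k i) = List.ofFn fun i : Fin n => x i := by
      congr 1
      funext i
      exact hxstab n k (le_max_right _ _) i i.2
    have e2 : (List.ofFn fun i : Fin n => ℓx (xk k) i) = List.ofFn fun i : Fin n => ℓ i := by
      congr 1
      funext i
      exact hℓstab n k (le_max_left _ _) i (Nat.le_of_lt_succ (Nat.lt_succ_of_lt i.2))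
    rw [e1, e2] at hb
    exact hb
  have hxA : x ∈ A := by rw [hA]; exact ⟨ℓ, hbr⟩
  refine ⟨hxA, fun n => ?_⟩
  set k := max (Kφ n) ((Finset.range (n + 1)).sup Kx) with hk
  have hlam : φ n (xk k) = lam n := hKφ n k (le_max_left _ _)
  rw [← hlam]
  rw [← not_lt]
  intro hl
  obtain ⟨i, hagree, hlt⟩ := (hφ n (xk k) (hkA k) x hxA).mp hl
  dsimp only at hlt
  have hxi : xk k i.1 = x i.1 := hxstab (n + 1) k (le_max_right _ _) i.1 i.2
  have hℓi : ℓx (xk k) i.1 = ℓ i.1 := hℓstab n k (le_max_left _ _) i.1 (Nat.le_of_lt_succ i.2)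
  have hℓlt : ℓ i.1 < ℓx x i.1 := by
    rcases hlt with h | h
    · rw [hxi] at h; exact absurd h (lt_irrefl _)
    · rw [hℓi] at h; exact h.2
  have hagree' : ∀ j : Fin (n + 1), j < i → ℓ j.1 = ℓx x j.1 := by
    intro j hj
    have := (Prod.ext_iff.mp (hagree j hj)).2
    dsimp only at this
    rw [hℓstab n k (le_max_left _ _) j.1 (Nat.le_of_lt_succ j.2)] at this
    exact this
  rcases (hℓx x hxA).2 ℓ hbr with heq | ⟨m, hm1, hm2⟩
  · rw [← heq] at hℓlt
    exact lt_irrefl _ hℓlt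
  · rcases lt_trichotomy m i.1 with h | h | h
    · have := hagree' ⟨m, lt_trans h i.2⟩ h
      rw [← this] at hm2
      exact lt_irrefl _ hm2
    · subst h
      exact lt_asymm hm2 hℓlt
    · have := hm1 i.1 h
      rw [this] at hℓlt
      exact lt_irrefl _ hℓlt
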